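/- Let K be a simplicial complex on [m] = {1,…,m}, let K¹ = {I ∈ K : |I| ≤ 2} be its one-skeleton, and let G_1,…,G_m be groups. The canonical homomorphism colim_{I∈K¹} ∏_{i∈I} G_i → colim_{I∈K} ∏_{i∈I} G_i, induced by the inclusion of the face poset of K¹ into the face poset of K, is an isomorphism of groups (the colimits are taken in the category of groups over the respective face posets, with structure maps ∏_{i∈I} G_i → ∏_{j∈J} G_j for I ⊆ J given by extending by identity elements). -/
import Mathlib


/-- For `I ⊆ J`, the homomorphism `∏_{i∈I} G i → ∏_{j∈J} G j` extending by identity elements. -/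
def extendHom {m : ℕ} (G : Fin m → Type) [∀ i, Group (G i)] {I J : Finset (Fin m)}
    (h : I ⊆ J) : ((i : I) → G i) →* ((j : J) → G j) where
  toFun g j := if hj : j.val ∈ I then g ⟨j.val, hj⟩ else 1
  map_one' := by funext j; dsimp; split <;> rfl
  map_mul' x y := by funext j; dsimp; split <;> simp

/-- `(P, φ)` is a colimit, in the category of groups, of the diagram over the face poset of
`K` that assigns to a face `I ∈ K` the group `∏_{i∈I} G i` and to an inclusion `I ⊆ J` the
homomorphism extending by identity elements: the `φ I` form a compatible cocone, and for
every group `H` and every compatible family `ψ` there is a unique homomorphism `h : P →* H`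
with `h ∘ φ I = ψ I` for all `I ∈ K`. -/
def IsGraphColimit {m : ℕ} (K : Set (Finset (Fin m))) (G : Fin m → Type) [∀ i, Group (G i)]
    (P : Type) [Group P]
    (φ : (I : Finset (Fin m)) → I ∈ K → (((i : I) → G i.val) →* P)) : Prop :=
  (∀ (I J : Finset (Fin m)) (hI : I ∈ K) (hJ : J ∈ K) (hIJ : I ⊆ J),
      (φ J hJ).comp (extendHom G hIJ) = φ I hI) ∧
  ∀ (H : Type) [Group H] (ψ : (I : Finset (Fin m)) → I ∈ K → (((i : I) → G i.val) →* H)),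
    (∀ (I J : Finset (Fin m)) (hI : I ∈ K) (hJ : J ∈ K) (hIJ : I ⊆ J),
        (ψ J hJ).comp (extendHom G hIJ) = ψ I hI) →
    ∃! h : P →* H, ∀ (I : Finset (Fin m)) (hI : I ∈ K), h.comp (φ I hI) = ψ I hI

theorem extendHom_mulSingle {m : ℕ} (G : Fin m → Type) [∀ i, Group (G i)]
    {I J : Finset (Fin m)} (h : I ⊆ J) (i : Fin m) (hi : i ∈ I) (x : G i) :
    extendHom G h (Pi.mulSingle (⟨i, hi⟩ : I) x) = Pi.mulSingle (⟨i, h hi⟩ : J) x := by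
  classical
  funext j
  obtain ⟨j, hj⟩ := j
  simp only [extendHom, MonoidHom.coe_mk, OneHom.coe_mk]
  by_cases hji : j = i
  · subst hji
    rw [dif_pos hi]
    simp [Pi.mulSingle_eq_same]
  · have h2 : (⟨j, hj⟩ : J) ≠ ⟨i, h hi⟩ := fun e => hji (congrArg Subtype.val e)
    rw [Pi.mulSingle_eq_of_ne h2]
    split
    · next hjI =>
      have h1 : (⟨j, hjI⟩ : I) ≠ ⟨i, hi⟩ := fun e => hji (congrArg Subtype.val e)
      exact Pi.mulSingle_eq_of_ne h1 _
    · rfl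

theorem skeleton_colimit_iso' {m : ℕ} (K : Set (Finset (Fin m)))
    (hdown : ∀ I ∈ K, ∀ J ⊆ I, J ∈ K) (hempty : ∅ ∈ K)
    (hsingle : ∀ i : Fin m, ({i} : Finset (Fin m)) ∈ K)
    (G : Fin m → Type) [∀ i, Group (G i)]
    (P₁ : Type) [Group P₁]
    (φ₁ : (I : Finset (Fin m)) → I ∈ {I | I ∈ K ∧ I.card ≤ 2} →
      (((i : I) → G i.val) →* P₁))
    (hcol₁ : IsGraphColimit {I | I ∈ K ∧ I.card ≤ 2} G P₁ φ₁)
    (P : Type) [Group P]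
    (φ : (I : Finset (Fin m)) → I ∈ K → (((i : I) → G i.val) →* P))
    (hcol : IsGraphColimit K G P φ)
    (f : P₁ →* P)
    (hf : ∀ (I : Finset (Fin m)) (hI : I ∈ {I | I ∈ K ∧ I.card ≤ 2}),
      f.comp (φ₁ I hI) = φ I hI.1) :
    Function.Bijective f := by
  classical
  obtain ⟨hφ₁c, hφ₁u⟩ := hcol₁
  obtain ⟨hφc, hφu⟩ := hcol
  have hs1 : ∀ i : Fin m, ({i} : Finset (Fin m)) ∈ {I | I ∈ K ∧ I.card ≤ 2} :=
    fun i => ⟨hsingle i, by simp⟩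
  -- the vertex homomorphisms into P₁
  let e : (i : Fin m) → G i →* P₁ := fun i =>
    (φ₁ {i} (hs1 i)).comp
      (MonoidHom.mulSingle (fun j : ({i} : Finset (Fin m)) => G j.val)
        ⟨i, Finset.mem_singleton_self i⟩)
  have he : ∀ (S : Finset (Fin m)) (hS : S ∈ {I | I ∈ K ∧ I.card ≤ 2})
      (i : Fin m) (hiS : i ∈ S) (x : G i),
      e i x = φ₁ S hS (Pi.mulSingle ⟨i, hiS⟩ x) := by
    intro S hS i hiS x
    have hsub : ({i} : Finset (Fin m)) ⊆ S := Finset.singleton_subset_iff.mpr hiS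
    have h2 := DFunLike.congr_fun (hφ₁c {i} S (hs1 i) hS hsub)
      (Pi.mulSingle (⟨i, Finset.mem_singleton_self i⟩ : ({i} : Finset (Fin m))) x)
    simp only [MonoidHom.comp_apply, extendHom_mulSingle G hsub i
      (Finset.mem_singleton_self i) x] at h2
    exact h2.symm
  -- images of distinct vertex maps commute, as long as both vertices lie in a common face
  have hcommP : ∀ (I : Finset (Fin m)), I ∈ K →
      Pairwise fun (i j : ↥I) => ∀ x y, Commute (e i.val x) (e j.val y) := by
    intro I hI i j hij x y
    have hivj : i.val ≠ j.val := fun h => hij (Subtype.ext h)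
    have hSsub : ({i.val, j.val} : Finset (Fin m)) ⊆ I := by
      intro k hk
      rcases Finset.mem_insert.mp hk with h | h
      · exact h ▸ i.2
      · exact (Finset.mem_singleton.mp h) ▸ j.2
    have hSK1 : ({i.val, j.val} : Finset (Fin m)) ∈ {I | I ∈ K ∧ I.card ≤ 2} :=
      ⟨hdown I hI _ hSsub, (Finset.card_insert_le _ _).trans (by simp)⟩
    have hiS : i.val ∈ ({i.val, j.val} : Finset (Fin m)) := by simp
    have hjS : j.val ∈ ({i.val, j.val} : Finset (Fin m)) := by simp
    rw [he _ hSK1 i.val hiS x, he _ hSK1 j.val hjS y]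
    have hne : (⟨i.val, hiS⟩ : ({i.val, j.val} : Finset (Fin m))) ≠ ⟨j.val, hjS⟩ :=
      fun h => hivj (by simpa using h)
    exact (Pi.mulSingle_commute hne x y).map (φ₁ _ hSK1)
  -- the cocone ψ over the whole of K, landing in P₁
  let ψ : (I : Finset (Fin m)) → I ∈ K → (((i : I) → G i.val) →* P₁) := fun I hI =>
    MonoidHom.noncommPiCoprod (fun i : I => e i.val) (hcommP I hI)
  have hψ_single : ∀ (I : Finset (Fin m)) (hI : I ∈ K) (i : Fin m) (hi : i ∈ I)
      (x : G i), ψ I hI (Pi.mulSingle ⟨i, hi⟩ x) = e i x := by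
    intro I hI i hi x
    exact MonoidHom.noncommPiCoprod_mulSingle (fun i : I => e i.val) ⟨i, hi⟩ x
  have hψcoc : ∀ (I J : Finset (Fin m)) (hI : I ∈ K) (hJ : J ∈ K) (hIJ : I ⊆ J),
      (ψ J hJ).comp (extendHom G hIJ) = ψ I hI := by
    intro I J hI hJ hIJ
    apply MonoidHom.pi_ext
    rintro ⟨i, hi⟩ x
    rw [MonoidHom.comp_apply, extendHom_mulSingle G hIJ i hi x,
      hψ_single J hJ i (hIJ hi) x, hψ_single I hI i hi x]
  have hψeq : ∀ (I : Finset (Fin m)) (hI : I ∈ {I | I ∈ K ∧ I.card ≤ 2}),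
      ψ I hI.1 = φ₁ I hI := by
    intro I hI
    apply MonoidHom.pi_ext
    rintro ⟨i, hi⟩ x
    rw [hψ_single I hI.1 i hi x, he I hI i hi x]
  have hfψ : ∀ (I : Finset (Fin m)) (hI : I ∈ K), f.comp (ψ I hI) = φ I hI := by
    intro I hI
    apply MonoidHom.pi_ext
    rintro ⟨i, hi⟩ x
    have hsub : ({i} : Finset (Fin m)) ⊆ I := Finset.singleton_subset_iff.mpr hi
    have h3 := DFunLike.congr_fun (hφc {i} I (hsingle i) hI hsub)
      (Pi.mulSingle (⟨i, Finset.mem_singleton_self i⟩ : ({i} : Finset (Fin m))) x)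
    simp only [MonoidHom.comp_apply, extendHom_mulSingle G hsub i
      (Finset.mem_singleton_self i) x] at h3
    have h4 := DFunLike.congr_fun (hf {i} (hs1 i))
      (Pi.mulSingle (⟨i, Finset.mem_singleton_self i⟩ : ({i} : Finset (Fin m))) x)
    rw [MonoidHom.comp_apply, hψ_single I hI i hi x]
    calc f (e i x)
        = φ {i} (hsingle i) (Pi.mulSingle ⟨i, Finset.mem_singleton_self i⟩ x) := h4
      _ = φ I hI (Pi.mulSingle ⟨i, hi⟩ x) := h3.symm
  obtain ⟨g, hg, hguniq⟩ := hφu P₁ ψ hψcoc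
  have hfg : f.comp g = MonoidHom.id P := by
    obtain ⟨h, hh, hhuniq⟩ := hφu P φ hφc
    have h1 : ∀ (I : Finset (Fin m)) (hI : I ∈ K),
        (f.comp g).comp (φ I hI) = φ I hI := by
      intro I hI
      rw [MonoidHom.comp_assoc, hg I hI, hfψ I hI]
    have h2 : ∀ (I : Finset (Fin m)) (hI : I ∈ K),
        (MonoidHom.id P).comp (φ I hI) = φ I hI := by
      intro I hI; rw [MonoidHom.id_comp]
    exact (hhuniq _ h1).trans (hhuniq _ h2).symm
  have hgf : g.comp f = MonoidHom.id P₁ := by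
    obtain ⟨h, hh, hhuniq⟩ := hφ₁u P₁ φ₁ hφ₁c
    have h1 : ∀ (I : Finset (Fin m)) (hI : I ∈ {I | I ∈ K ∧ I.card ≤ 2}),
        (g.comp f).comp (φ₁ I hI) = φ₁ I hI := by
      intro I hI
      rw [MonoidHom.comp_assoc, hf I hI, hg I hI.1, hψeq I hI]
    have h2 : ∀ (I : Finset (Fin m)) (hI : I ∈ {I | I ∈ K ∧ I.card ≤ 2}),
        (MonoidHom.id P₁).comp (φ₁ I hI) = φ₁ I hI := by
      intro I hI; rw [MonoidHom.id_comp]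
    exact (hhuniq _ h1).trans (hhuniq _ h2).symm
  exact Function.bijective_iff_has_inverse.mpr
    ⟨g, fun x => DFunLike.congr_fun hgf x, fun x => DFunLike.congr_fun hfg x⟩

/-- Let `K` be a simplicial complex on `[m]`, `K¹` its one-skeleton, and
`G_1, …, G_m` groups.  The canonical homomorphism from the colimit (in groups) of the
diagram `I ↦ ∏_{i∈I} G i` over the face poset of `K¹` to the colimit of the corresponding
diagram over the face poset of `K` — that is, the unique homomorphism commuting with the
cocone maps — is an isomorphism of groups. -/
theorem skeleton_colimit_iso {m : ℕ} (K : Set (Finset (Fin m)))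
    (hdown : ∀ I ∈ K, ∀ J ⊆ I, J ∈ K) (hempty : ∅ ∈ K)
    (hsingle : ∀ i : Fin m, ({i} : Finset (Fin m)) ∈ K)
    (G : Fin m → Type) [∀ i, Group (G i)]
    (P₁ : Type) [Group P₁]
    (φ₁ : (I : Finset (Fin m)) → I ∈ {I | I ∈ K ∧ I.card ≤ 2} →
      (((i : I) → G i.val) →* P₁))
    (hcol₁ : IsGraphColimit {I | I ∈ K ∧ I.card ≤ 2} G P₁ φ₁)
    (P : Type) [Group P]
    (φ : (I : Finset (Fin m)) → I ∈ K → (((i : I) → G i.val) →* P))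
    (hcol : IsGraphColimit K G P φ)
    (f : P₁ →* P)
    (hf : ∀ (I : Finset (Fin m)) (hI : I ∈ {I | I ∈ K ∧ I.card ≤ 2}),
      f.comp (φ₁ I hI) = φ I hI.1) :
    Function.Bijective f :=
  skeleton_colimit_iso' K hdown hempty hsingle G P₁ φ₁ hcol₁ P φ hcol f hf
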